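/- arXiv:1103.4262 — 2 statements merged into one kernel-verified Lean document; each statement's English description precedes it below -/
import Mathlib

section
/- Let F, G : 𝒞 → 𝒟 be functors with 𝒞 having a terminal object, and let γ : F ⟹ G be a cartesian natural transformation (all naturality squares are pullbacks). If G is a parametric right adjoint, then F is a parametric right adjoint. -/
open CategoryTheory CategoryTheory.Limits

/-- The canonical factorization `F₁ : 𝒞 ⥤ 𝒟/F(1)` of a functor `F : 𝒞 ⥤ 𝒟` out of a
category with a terminal object, sending `c` to `F(!_c)`. -/
noncomputable def praFactor {C : Type*} [Category C] {D : Type*} [Category D] [HasTerminal C]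
    (F : C ⥤ D) : C ⥤ Over (F.obj (⊤_ C)) where
  obj c := Over.mk (F.map (terminal.from c))
  map {c c'} f := Over.homMk (F.map f) (by dsimp; rw [← F.map_comp, terminal.comp_from])

/-- A functor out of a category with a terminal object is a parametric right adjoint
if its canonical factorization through the slice over the image of the terminal object
has a left adjoint. -/
def IsPRA {C : Type*} [Category C] {D : Type*} [Category D] [HasTerminal C]
    (F : C ⥤ D) : Prop :=
  (praFactor F).IsRightAdjoint


/-!
Since `F(c)` is the pullback of `G(!_c)` along `γ₁ : F(1) ⟶ G(1)`, maps `X ⟶ F₁ c` over `F(1)`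
correspond, naturally in `c`, to maps `Σ_{γ₁} X ⟶ G₁ c` over `G(1)`. Hence if `L ⊣ G₁`, then
`L ∘ Σ_{γ₁} ⊣ F₁`.
-/

namespace CategoryTheory

section

variable {D : Type*} [Category D]

/-- Objectwise form of the adjunction `Over.map f ⊣ Over.pullback f`, needing only
the one pullback at hand. -/
@[simps]
noncomputable def IsPullback.overMapHomEquiv {P Y Z Y' : D}
    {fst : P ⟶ Y} {snd : P ⟶ Z} {f : Y ⟶ Y'} {h : Z ⟶ Y'}
    (hP : IsPullback fst snd f h) (X : Over Y) :
    (X ⟶ Over.mk fst) ≃ ((Over.map f).obj X ⟶ Over.mk h) where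
  toFun u := Over.homMk (u.left ≫ snd) (by simpa [← hP.w] using Over.w u =≫ f)
  invFun v := Over.homMk (hP.lift X.hom v.left (by simpa using (Over.w v).symm)) (by simp)
  left_inv u := by
    ext
    apply hP.hom_ext
    · simpa using (Over.w u).symm
    · simp
  right_inv v := by
    ext
    simp

lemma IsPullback.overMapHomEquiv_comp {P Q Y Z W Y' : D}
    {fst : P ⟶ Y} {snd : P ⟶ Z} {fst' : Q ⟶ Y} {snd' : Q ⟶ W} {f : Y ⟶ Y'}
    {h : Z ⟶ Y'} {h' : W ⟶ Y'} (hP : IsPullback fst snd f h) (hQ : IsPullback fst' snd' f h')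
    {X : Over Y} (u : X ⟶ Over.mk fst) (k : Over.mk fst ⟶ Over.mk fst')
    (l : Over.mk h ⟶ Over.mk h') (hkl : k.left ≫ snd' = snd ≫ l.left) :
    hQ.overMapHomEquiv X (u ≫ k) = hP.overMapHomEquiv X u ≫ l := by
  ext
  simp [hkl]

end

lemma Functor.isRightAdjoint_of_homEquiv {C C' D : Type*} [Category C] [Category C']
    [Category D] {R : D ⥤ C} {R' : D ⥤ C'} [R'.IsRightAdjoint] (φ : C → C')
    (e : ∀ X Y, (X ⟶ R.obj Y) ≃ (φ X ⟶ R'.obj Y))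
    (he : ∀ X Y Y' (g : Y ⟶ Y') (u : X ⟶ R.obj Y), e X Y' (u ≫ R.map g) = e X Y u ≫ R'.map g) :
    R.IsRightAdjoint :=
  let adj := Adjunction.ofIsRightAdjoint R'
  (Adjunction.adjunctionOfEquivLeft (fun X Y => (adj.homEquiv (φ X) Y).trans (e X Y).symm)
    (fun X Y Y' g v => by
      simp only [Equiv.trans_apply, Equiv.symm_apply_eq, he, Equiv.apply_symm_apply,
        adj.homEquiv_naturality_right])).isRightAdjoint

end CategoryTheory

/-- If `γ : F ⟹ G` is a cartesian natural transformation (all naturality squares are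
pullbacks) and `G` is a parametric right adjoint, then so is `F`. -/
theorem isPRA_of_cartesian_natTrans {C : Type*} [Category C] {D : Type*} [Category D]
    [HasTerminal C] (F G : C ⥤ D) (γ : F ⟶ G)
    (hcart : ∀ {X Y : C} (f : X ⟶ Y),
      IsPullback (F.map f) (γ.app X) (γ.app Y) (G.map f))
    (hG : IsPRA G) : IsPRA F :=
  have : (praFactor G).IsRightAdjoint := hG
  Functor.isRightAdjoint_of_homEquiv (R' := praFactor G) (Over.map (γ.app (⊤_ C))).obj
    (fun X c => (hcart (terminal.from c)).overMapHomEquiv X)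
    (fun _ _ _ g u => (hcart _).overMapHomEquiv_comp (hcart _) u ((praFactor F).map g)
      ((praFactor G).map g) (γ.naturality g))
end

section
/- If i : Θ₀ → 𝒜 is a dense fully faithful functor into a category 𝒜 with coproducts, and S is a set, then the induced functor i_S : S × Θ₀ → 𝒜/(∐_{s∈S} 1), sending (s, θ) to the composite i(θ) → 1 → ∐_S 1 via the s-th coproduct injection, is dense and fully faithful (assuming 𝒜 has a terminal object 1 and the coproduct injections are monic and the colorings separate: every map i(θ) → ∐_S 1 with θ connected factors through exactly one injection). In particular, density of arities is preserved under coloring. -/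
open CategoryTheory CategoryTheory.Limits

universe v u₁ u₂ w

/-- The nerve functor induced by `i : C ⥤ D`, `d ↦ hom_D(i(-), d)`. -/
noncomputable def nerveOf {C : Type u₁} [Category.{v} C] {D : Type u₂} [Category.{v} D]
    (i : C ⥤ D) : D ⥤ Cᵒᵖ ⥤ Type v :=
  yoneda ⋙ (Functor.whiskeringLeft _ _ (Type v)).obj (Functor.op i)

/-- `i` is dense when the induced nerve `d ↦ hom(i(-), d)` is fully faithful. -/
def IsDenseF {C : Type u₁} [Category.{v} C] {D : Type u₂} [Category.{v} D]
    (i : C ⥤ D) : Prop :=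
  (nerveOf i).Full ∧ (nerveOf i).Faithful

/-- The `S`-colored inclusion: the disjoint union of `S` copies of `C` is included in
the slice of `D` over the coproduct of `S` copies of the terminal object, the copy of
index `s` being included via the `s`-th coproduct injection (the `s`-th color). -/
noncomputable def coloredInclusion {C : Type u₁} [Category.{v} C] {D : Type u₂}
    [Category.{v} D] (i : C ⥤ D) (S : Type w) [HasTerminal D]
    [HasCoproduct (fun _ : S => ⊤_ D)] :
    Discrete S × C ⥤ Over (∐ fun _ : S => ⊤_ D) where
  obj p := Over.mk (terminal.from (i.obj p.2) ≫ Sigma.ι (fun _ : S => ⊤_ D) p.1.as)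
  map {p q} f := Over.homMk (i.map f.2) (by
    have h : p.1.as = q.1.as := Discrete.eq_of_hom f.1
    dsimp
    rw [h, ← Category.assoc, terminal.comp_from])

/-!
Under the separation hypothesis a map `g : i(θ) ⟶ X` over `∐_S 1` has exactly one color `s`, so
maps `i_S(s, θ) ⟶ X` are the same as maps `i(θ) ⟶ X` of color `s`. A transformation `φ` between
the nerves of `X` and `Y` along `i_S` therefore induces a transformation between the nerves of
the underlying objects along `i`, which preserves the structure maps to `∐_S 1`. Density of `i`
turns it into a map `X.left ⟶ Y.left`, and faithfulness of the nerve along `i` shows that this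
map lies over `∐_S 1`.
-/

section Nerve

variable {C : Type u₁} [Category.{v} C] {D : Type u₂} [Category.{v} D] (i : C ⥤ D)

variable {i} in
lemma nerveOf_hom_naturality {d d' : D} (φ : (nerveOf i).obj d ⟶ (nerveOf i).obj d')
    {c c' : C} (f : c' ⟶ c) (x : i.obj c ⟶ d) :
    φ.app (Opposite.op c') (i.map f ≫ x) = i.map f ≫ φ.app (Opposite.op c) x :=
  ConcreteCategory.congr_hom (φ.naturality f.op) x

lemma faithful_nerveOf_iff : (nerveOf i).Faithful ↔
    ∀ {d d' : D} (m m' : d ⟶ d'), (∀ (c : C) (x : i.obj c ⟶ d), x ≫ m = x ≫ m') → m = m' := by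
  refine ⟨fun h d d' m m' hm => (nerveOf i).map_injective ?_, fun h => ⟨fun hm => h _ _ ?_⟩⟩
  · ext ⟨c⟩ x
    exact hm c x
  · intro c x
    exact types_congr_hom (congrArg (NatTrans.app · (Opposite.op c)) hm) x

lemma full_nerveOf_iff : (nerveOf i).Full ↔
    ∀ {d d' : D} (φ : (nerveOf i).obj d ⟶ (nerveOf i).obj d'),
      ∃ m : d ⟶ d', ∀ (c : C) (x : i.obj c ⟶ d), x ≫ m = φ.app (Opposite.op c) x := by
  refine ⟨fun h d d' φ => ?_, fun h => ⟨fun {d d'} φ => ?_⟩⟩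
  · obtain ⟨m, hm⟩ := (nerveOf i).map_surjective φ
    exact ⟨m, fun c x => by rw [← hm]; rfl⟩
  · obtain ⟨m, hm⟩ := h φ
    exact ⟨m, by ext ⟨c⟩ x; exact hm c x⟩

end Nerve

section Colors

variable {A : Type u₂} [Category.{v} A] (S : Type w) [HasTerminal A]
  [HasCoproduct (fun _ : S => ⊤_ A)]

noncomputable abbrev colorMap (a : A) (s : S) : a ⟶ ∐ fun _ : S => ⊤_ A :=
  terminal.from a ≫ Sigma.ι (fun _ : S => ⊤_ A) s

@[simp]
lemma comp_colorMap {a b : A} (f : a ⟶ b) (s : S) : f ≫ colorMap S b s = colorMap S a s := by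
  rw [← Category.assoc, terminal.comp_from]

variable {Θ₀ : Type u₁} [Category.{v} Θ₀] (i : Θ₀ ⥤ A)

def SeparatesColors : Prop :=
  ∀ (θ : Θ₀) (f : i.obj θ ⟶ ∐ fun _ : S => ⊤_ A), ∃! s : S, f = colorMap S (i.obj θ) s

variable {S i} (hsep : SeparatesColors S i)

noncomputable def SeparatesColors.color {θ : Θ₀} (f : i.obj θ ⟶ ∐ fun _ : S => ⊤_ A) : S :=
  (hsep θ f).exists.choose

lemma SeparatesColors.eq_colorMap_color {θ : Θ₀} (f : i.obj θ ⟶ ∐ fun _ : S => ⊤_ A) :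
    f = colorMap S (i.obj θ) (hsep.color f) :=
  (hsep θ f).exists.choose_spec

lemma SeparatesColors.color_eq {θ : Θ₀} {f : i.obj θ ⟶ ∐ fun _ : S => ⊤_ A} {s : S}
    (h : f = colorMap S (i.obj θ) s) : hsep.color f = s :=
  (hsep θ f).unique (hsep.eq_colorMap_color f) h

end Colors

section ColoredInclusion

variable {Θ₀ : Type u₁} [Category.{v} Θ₀] {A : Type u₂} [Category.{v} A] (i : Θ₀ ⥤ A)
  (S : Type w) [HasTerminal A] [HasCoproduct (fun _ : S => ⊤_ A)]

lemma coloredInclusion_hom_w {s : S} {θ : Θ₀} {X : Over (∐ fun _ : S => ⊤_ A)}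
    (u : (coloredInclusion i S).obj (⟨s⟩, θ) ⟶ X) :
    u.left ≫ X.hom = colorMap S (i.obj θ) s :=
  Over.w u

instance [i.Faithful] : (coloredInclusion i S).Faithful where
  map_injective h :=
    Prod.ext (Subsingleton.elim _ _) (i.map_injective (congrArg CommaMorphism.left h))

lemma coloredInclusion_full [i.Full] (hsep : SeparatesColors S i) :
    (coloredInclusion i S).Full where
  map_surjective {p q} f := by
    obtain ⟨⟨s⟩, θ⟩ := p
    obtain ⟨⟨t⟩, θ'⟩ := q
    obtain rfl : s = t := by
      have hw : colorMap S (i.obj θ) s = colorMap S (i.obj θ) t :=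
        (coloredInclusion_hom_w i S f).symm.trans (comp_colorMap S f.left t)
      exact (hsep.color_eq rfl).symm.trans (hsep.color_eq hw)
    exact ⟨(𝟙 _, i.preimage f.left), by ext; exact i.map_preimage _⟩

end ColoredInclusion

section ForgetColors

variable {Θ₀ : Type u₁} [Category.{v} Θ₀] {A : Type u₂} [Category.{v} A] {i : Θ₀ ⥤ A}
  {S : Type v} [HasTerminal A] [HasCoproduct (fun _ : S => ⊤_ A)]
  (hsep : SeparatesColors S i) {X Y : Over (∐ fun _ : S => ⊤_ A)}

noncomputable def SeparatesColors.overHom {θ : Θ₀} (g : i.obj θ ⟶ X.left) :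
    (coloredInclusion i S).obj (⟨hsep.color (g ≫ X.hom)⟩, θ) ⟶ X :=
  Over.homMk g (hsep.eq_colorMap_color _)

variable (φ : (nerveOf (coloredInclusion i S)).obj X ⟶ (nerveOf (coloredInclusion i S)).obj Y)

lemma SeparatesColors.app_overHom_left {θ : Θ₀} {s : S} (g : i.obj θ ⟶ X.left)
    (h : g ≫ X.hom = colorMap S (i.obj θ) s) :
    (φ.app (Opposite.op (⟨hsep.color (g ≫ X.hom)⟩, θ)) (hsep.overHom g)).left =
      (φ.app (Opposite.op (⟨s⟩, θ)) (Over.homMk g h)).left := by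
  obtain rfl := hsep.color_eq h
  rfl

noncomputable def SeparatesColors.nerveHomLeft :
    (nerveOf i).obj X.left ⟶ (nerveOf i).obj Y.left where
  app θ := TypeCat.ofHom fun g => (φ.app (Opposite.op (_, θ.unop)) (hsep.overHom g)).left
  naturality := by
    rintro ⟨θ⟩ ⟨θ'⟩ ⟨u : θ' ⟶ θ⟩
    ext (g : i.obj θ ⟶ X.left)
    change (φ.app _ (hsep.overHom (i.map u ≫ g))).left = i.map u ≫ (φ.app _ (hsep.overHom g)).left
    set c := hsep.color (g ≫ X.hom)
    have h : (i.map u ≫ g) ≫ X.hom = colorMap S (i.obj θ') c := by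
      rw [Category.assoc, hsep.eq_colorMap_color (g ≫ X.hom)]
      exact comp_colorMap S (i.map u) c
    have hu : Over.homMk (i.map u ≫ g) h =
        (coloredInclusion i S).map ((𝟙 _, u) : ((⟨c⟩, θ') : Discrete S × Θ₀) ⟶ (⟨c⟩, θ)) ≫
          hsep.overHom g := by
      ext; rfl
    exact (hsep.app_overHom_left φ _ h).trans ((congrArg (fun v => (φ.app _ v).left) hu).trans
      (congrArg CommaMorphism.left (nerveOf_hom_naturality φ _ (hsep.overHom g))))

lemma SeparatesColors.nerveHomLeft_app {θ : Θ₀} {s : S}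
    (u : (coloredInclusion i S).obj (⟨s⟩, θ) ⟶ X) :
    (hsep.nerveHomLeft φ).app (Opposite.op θ) u.left = (φ.app (Opposite.op (⟨s⟩, θ)) u).left :=
  hsep.app_overHom_left φ u.left (coloredInclusion_hom_w i S u)

end ForgetColors

section NerveOfColoredInclusion

variable {Θ₀ : Type u₁} [Category.{v} Θ₀] {A : Type u₂} [Category.{v} A] {i : Θ₀ ⥤ A}
  {S : Type v} [HasTerminal A] [HasCoproduct (fun _ : S => ⊤_ A)]

lemma nerveOf_coloredInclusion_faithful (hsep : SeparatesColors S i)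
    (hfaith : (nerveOf i).Faithful) : (nerveOf (coloredInclusion i S)).Faithful := by
  rw [faithful_nerveOf_iff] at hfaith ⊢
  intro X Y m m' hm
  ext
  exact hfaith _ _ fun θ g => congrArg CommaMorphism.left (hm (_, θ) (hsep.overHom g))

lemma nerveOf_coloredInclusion_full (hsep : SeparatesColors S i) (hd : IsDenseF i) :
    (nerveOf (coloredInclusion i S)).Full := by
  obtain ⟨hfull, hfaith⟩ := hd
  rw [full_nerveOf_iff] at hfull ⊢
  rw [faithful_nerveOf_iff] at hfaith
  intro X Y φ
  obtain ⟨m, hm⟩ := hfull (hsep.nerveHomLeft φ)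
  have hw : m ≫ Y.hom = X.hom := hfaith _ _ fun θ g => by
    rw [← Category.assoc, hm]
    exact (Over.w (φ.app _ (hsep.overHom g))).trans (hsep.eq_colorMap_color _).symm
  refine ⟨Over.homMk m hw, fun ⟨⟨s⟩, θ⟩ u => ?_⟩
  ext
  exact (hm θ u.left).trans (hsep.nerveHomLeft_app φ u)

end NerveOfColoredInclusion

theorem colored_inclusion_dense_general {Θ₀ : Type u₁} [Category.{v} Θ₀]
    {A : Type u₂} [Category.{v} A] (i : Θ₀ ⥤ A) [i.Full] [i.Faithful]
    (hd : IsDenseF i) (S : Type v) [HasTerminal A]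
    [HasCoproduct (fun _ : S => ⊤_ A)]
    (hsep : ∀ (θ : Θ₀) (f : i.obj θ ⟶ ∐ fun _ : S => ⊤_ A),
      ∃! s : S, f = terminal.from (i.obj θ) ≫ Sigma.ι (fun _ : S => ⊤_ A) s) :
    (coloredInclusion i S).Full ∧ (coloredInclusion i S).Faithful ∧
      IsDenseF (coloredInclusion i S) :=
  ⟨coloredInclusion_full i S hsep, inferInstance,
    nerveOf_coloredInclusion_full hsep hd, nerveOf_coloredInclusion_faithful hsep hd.2⟩

/-- Density of arities is preserved under coloring: if `i : Θ₀ ⥤ 𝒜` is dense and fully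
faithful, the coproduct injections are monic and the colorings separate (every map
`i(θ) ⟶ ∐_S 1` factors through exactly one injection), then the induced functor
`S × Θ₀ ⥤ 𝒜/(∐_S 1)` is fully faithful and dense. -/
theorem colored_inclusion_dense {Θ₀ : Type u₁} [Category.{v} Θ₀]
    {A : Type u₂} [Category.{v} A] (i : Θ₀ ⥤ A) [i.Full] [i.Faithful]
    (hd : IsDenseF i) (S : Type v) [HasTerminal A]
    [HasCoproduct (fun _ : S => ⊤_ A)]
    (hmono : ∀ s : S, Mono (Sigma.ι (fun _ : S => ⊤_ A) s))
    (hsep : ∀ (θ : Θ₀) (f : i.obj θ ⟶ ∐ fun _ : S => ⊤_ A),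
      ∃! s : S, f = terminal.from (i.obj θ) ≫ Sigma.ι (fun _ : S => ⊤_ A) s) :
    (coloredInclusion i S).Full ∧ (coloredInclusion i S).Faithful ∧
      IsDenseF (coloredInclusion i S) :=
  colored_inclusion_dense_general i hd S hsep
end
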